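/- arXiv:math/0504016 — 2 statements merged into one kernel-verified Lean document; each statement's English description precedes it below -/
import Mathlib

section
/- Let ϑ be an arithmetic function with Σ_{d=1}^∞ |(ϑ∗μ)(d)| < ∞ (where ∗ is Dirichlet convolution and μ is the Möbius function). Let a, q ∈ ℤ with q > 0 and gcd(a,q) = 1. Then for t ≥ 0, Σ_{n ≤ t, n ≡ a (mod q)} ϑ(n) = (t/q)·Σ_{d ≥ 1, gcd(d,q)=1} (ϑ∗μ)(d)/d + O(Σ_{d ≥ 1} |(ϑ∗μ)(d)|), with implied constant absolute. -/
noncomputable def dconv (ϑ : ℕ → ℝ) (d : ℕ) : ℝ :=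
  ∑ e ∈ d.divisors, ϑ e * (ArithmeticFunction.moebius (d / e) : ℝ)

/-!
Möbius inversion writes `ϑ n = ∑_{d ∣ n} (ϑ∗μ)(d)`, so the sum of `ϑ` over `n ≤ t`, `n ≡ a (mod q)`
becomes `∑_d (ϑ∗μ)(d) · #{n ≤ t : n ≡ a (mod q), d ∣ n}`. Since `gcd(a, q) = 1`, this count vanishes
unless `gcd(d, q) = 1`; then `n = d m` where `m ≤ t / d` runs over a single residue class mod `q`,
so the count is `t / (d q) + O(1)`. Weighting the `O(1)` errors by `|(ϑ∗μ)(d)|` gives the bound.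
-/

open Finset

theorem sum_divisors_dconv (ϑ : ℕ → ℝ) {n : ℕ} (hn : 0 < n) :
    ∑ d ∈ n.divisors, dconv ϑ d = ϑ n := by
  refine (ArithmeticFunction.sum_eq_iff_sum_smul_moebius_eq.mpr ?_) n hn
  intro n _
  rw [Nat.sum_divisorsAntidiagonal' (f := fun x y => (ArithmeticFunction.moebius x : ℤ) • ϑ y)]
  exact sum_congr rfl fun d _ => by rw [zsmul_eq_mul, mul_comm]

theorem sum_eq_tsum_dconv_mul_card (ϑ : ℕ → ℝ) {s : Finset ℕ} (hs : 0 ∉ s) :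
    ∑ n ∈ s, ϑ n = ∑' d, dconv ϑ d * #{n ∈ s | d ∣ n} := by
  have hne : ∀ n ∈ s, n ≠ 0 := fun n hn h => hs (h ▸ hn)
  calc ∑ n ∈ s, ϑ n = ∑ n ∈ s, ∑ d ∈ n.divisors, dconv ϑ d :=
        sum_congr rfl fun n hn => (sum_divisors_dconv ϑ (Nat.pos_of_ne_zero (hne n hn))).symm
    _ = ∑ d ∈ s.biUnion Nat.divisors, ∑ n ∈ s with d ∣ n, dconv ϑ d :=
        sum_comm' fun n d => by
          simp only [mem_filter, mem_biUnion, Nat.mem_divisors]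
          exact ⟨fun ⟨hn, hd, h0⟩ => ⟨⟨hn, hd⟩, n, hn, hd, h0⟩,
            fun ⟨⟨hn, hd⟩, _⟩ => ⟨hn, hd, hne n hn⟩⟩
    _ = ∑ d ∈ s.biUnion Nat.divisors, dconv ϑ d * #{n ∈ s | d ∣ n} := by
        simp only [sum_const, nsmul_eq_mul, mul_comm]
    _ = ∑' d, dconv ϑ d * #{n ∈ s | d ∣ n} := by
        refine (tsum_eq_sum fun d hd => ?_).symm
        suffices {n ∈ s | d ∣ n} = ∅ by simp [this]
        refine filter_eq_empty_iff.mpr fun n hn hdn => hd ?_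
        exact mem_biUnion.mpr ⟨n, hn, Nat.mem_divisors.mpr ⟨hdn, hne n hn⟩⟩

theorem Nat.Coprime.of_dvd_of_intModEq {a : ℤ} {q d n : ℕ} (hco : Int.gcd a q = 1)
    (hn : (n : ℤ) ≡ a [ZMOD q]) (hd : d ∣ n) : d.Coprime q := by
  have : Int.gcd n q = 1 := by rw [← Int.gcd_emod, hn, Int.gcd_emod, hco]
  exact Nat.Coprime.coprime_dvd_left hd (by rwa [Int.gcd_natCast_natCast] at this)

theorem card_filter_and_dvd_Icc (P : ℕ → Prop) [DecidablePred P] (d N : ℕ) :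
    #{n ∈ Icc 1 N | P n ∧ d ∣ n} = #{m ∈ Icc 1 (N / d) | P (d * m)} := by
  rcases d.eq_zero_or_pos with rfl | hd
  · simp
    omega
  refine (card_nbij' (d * ·) (· / d) ?_ ?_ ?_ ?_).symm
  · intro m hm
    simp only [coe_filter, mem_Icc, Set.mem_ofPred_eq] at hm ⊢
    have := (Nat.le_div_iff_mul_le hd).mp hm.1.2
    exact ⟨⟨Nat.mul_pos hd hm.1.1, by linarith⟩, hm.2, dvd_mul_right d m⟩
  · intro n hn
    simp only [coe_filter, mem_Icc, Set.mem_ofPred_eq] at hn ⊢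
    obtain ⟨⟨hn1, hnN⟩, hP, hdn⟩ := hn
    exact ⟨⟨Nat.div_pos (Nat.le_of_dvd hn1 hdn) hd, Nat.div_le_div_right hnN⟩,
      by rwa [Nat.mul_div_cancel' hdn]⟩
  · intro m _
    exact Nat.mul_div_cancel_left m hd
  · intro n hn
    exact Nat.mul_div_cancel' (mem_filter.mp hn).2.2

theorem exists_forall_mul_intModEq_iff {q d : ℕ} (hq : 0 < q) (hd : d.Coprime q) (a : ℤ) :
    ∃ v : ℕ, ∀ m : ℕ, ((d * m : ℕ) : ℤ) ≡ a [ZMOD q] ↔ m ≡ v [MOD q] := by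
  have : NeZero q := ⟨hq.ne'⟩
  set u := ZMod.unitOfCoprime d hd
  refine ⟨((u⁻¹ : (ZMod q)ˣ) * (a : ZMod q)).val, fun m => ?_⟩
  rw [← ZMod.intCast_eq_intCast_iff, ← ZMod.natCast_eq_natCast_iff, ZMod.natCast_val,
    ZMod.cast_id', id, Units.eq_inv_mul_iff_mul_eq]
  push_cast
  rfl

theorem abs_card_filter_modEq_Icc_sub_div_lt {q : ℕ} (hq : 0 < q) (v N : ℕ) :
    |(#{m ∈ Icc 1 N | m ≡ v [MOD q]} : ℚ) - N / q| < 1 := by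
  have hcard := Nat.Ioc_filter_modEq_card 0 N hq v
  rw [← Icc_add_one_left_eq_Ioc, zero_add] at hcard
  set y : ℚ := (N - v) / q
  set z : ℚ := ((0 : ℕ) - v) / q
  have hyz : y - z = N / q := by simp only [y, z]; ring
  have := Int.floor_le y
  have := Int.lt_floor_add_one y
  have := Int.floor_le z
  have := Int.lt_floor_add_one z
  have hpos : (-1 : ℤ) < ⌊y⌋ - ⌊z⌋ := by
    have : (0 : ℚ) ≤ N / q := by positivity
    exact_mod_cast (by linarith : (-1 : ℚ) < ⌊y⌋ - ⌊z⌋)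
  rw [max_eq_left (by omega)] at hcard
  have hcardℚ : (#{m ∈ Icc 1 N | m ≡ v [MOD q]} : ℚ) = ⌊y⌋ - ⌊z⌋ := by exact_mod_cast hcard
  rw [hcardℚ, abs_lt]
  constructor <;> linarith

theorem abs_card_filter_modEq_Icc_floor_sub_le {q : ℕ} (hq : 0 < q) (v : ℕ) {x : ℝ} (hx : 0 ≤ x) :
    |(#{m ∈ Icc 1 ⌊x⌋₊ | m ≡ v [MOD q]} : ℝ) - x / q| ≤ 2 := by
  have hN : |(#{m ∈ Icc 1 ⌊x⌋₊ | m ≡ v [MOD q]} : ℝ) - ⌊x⌋₊ / q| ≤ 1 := by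
    have h := (Rat.cast_lt (K := ℝ)).mpr (abs_card_filter_modEq_Icc_sub_div_lt hq v ⌊x⌋₊)
    push_cast at h
    exact h.le
  have hx₁ := Nat.floor_le hx
  have hx₂ := Nat.lt_floor_add_one x
  have hq' : (1 : ℝ) ≤ q := by exact_mod_cast hq
  have : |x / q - ⌊x⌋₊ / q| ≤ 1 := by
    rw [← sub_div, abs_div, Nat.abs_cast, div_le_one (by positivity), abs_le]
    constructor <;> linarith
  calc _ ≤ _ := abs_sub_le _ ((⌊x⌋₊ : ℝ) / q) _
    _ ≤ 2 := by rw [abs_sub_comm] at this; linarith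

theorem abs_card_filter_intModEq_dvd_sub_le (a : ℤ) {q : ℕ} (hq : 0 < q) (hco : Int.gcd a q = 1)
    {t : ℝ} (ht : 0 ≤ t) (d : ℕ) :
    |(#{n ∈ Icc 1 ⌊t⌋₊ | ((n : ℕ) : ℤ) ≡ a [ZMOD q] ∧ d ∣ n} : ℝ) -
      t / q * (if d.gcd q = 1 then (d : ℝ)⁻¹ else 0)| ≤ 2 := by
  by_cases hdq : d.Coprime q
  · obtain ⟨v, hv⟩ := exists_forall_mul_intModEq_iff hq hdq a
    rw [if_pos hdq, card_filter_and_dvd_Icc, ← Nat.floor_div_natCast]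
    simp_rw [hv]
    convert abs_card_filter_modEq_Icc_floor_sub_le hq v (div_nonneg ht d.cast_nonneg) using 2
    ring
  · have : {n ∈ Icc 1 ⌊t⌋₊ | ((n : ℕ) : ℤ) ≡ a [ZMOD q] ∧ d ∣ n} = ∅ :=
      filter_eq_empty_iff.mpr fun n _ ⟨hn, hd⟩ => hdq (.of_dvd_of_intModEq hco hn hd)
    simp [this, if_neg hdq]

theorem abs_tsum_mul_sub_tsum_mul_le {ι : Type*} {c u v : ι → ℝ} {B K : ℝ}
    (hc : Summable fun i => |c i|) (hv : ∀ i, |v i| ≤ B) (huv : ∀ i, |u i - v i| ≤ K) :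
    |∑' i, c i * u i - ∑' i, c i * v i| ≤ K * ∑' i, |c i| := by
  have hcv : Summable fun i => c i * v i :=
    .of_norm_bounded (hc.mul_right B) fun i => by
      rw [norm_mul]; exact mul_le_mul_of_nonneg_left (hv i) (abs_nonneg _)
  have hcu : Summable fun i => c i * u i := by
    refine .of_norm_bounded (hc.mul_right (K + B)) fun i => ?_
    rw [norm_mul, Real.norm_eq_abs, Real.norm_eq_abs]
    refine mul_le_mul_of_nonneg_left ?_ (abs_nonneg _)
    have := abs_sub_abs_le_abs_sub (u i) (v i)
    linarith [huv i, hv i]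
  rw [← hcu.tsum_sub hcv, ← tsum_mul_left, ← Real.norm_eq_abs]
  refine tsum_of_norm_bounded (hc.mul_left K).hasSum fun i => ?_
  rw [← mul_sub, norm_mul, Real.norm_eq_abs, Real.norm_eq_abs, mul_comm]
  exact mul_le_mul_of_nonneg_right (huv i) (abs_nonneg _)

/-- If `Σ_d |(ϑ∗μ)(d)| < ∞`, then for `gcd(a,q)=1` and `t ≥ 0`,
`Σ_{n ≤ t, n ≡ a (q)} ϑ(n) = (t/q) Σ_{gcd(d,q)=1} (ϑ∗μ)(d)/d + O(Σ_d |(ϑ∗μ)(d)|)`,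
with an absolute implied constant. -/
theorem stmt_9 :
    ∃ C : ℝ, ∀ (ϑ : ℕ → ℝ), Summable (fun d => |dconv ϑ d|) →
      ∀ (a : ℤ) (q : ℕ), 0 < q → Int.gcd a q = 1 →
      ∀ t : ℝ, 0 ≤ t →
      |(∑ n ∈ (Finset.Icc 1 ⌊t⌋₊).filter (fun n : ℕ => (n:ℤ) ≡ a [ZMOD (q:ℤ)]), ϑ n) -
        (t / q) * ∑' d : ℕ, (if Nat.gcd d q = 1 then dconv ϑ d / d else 0)| ≤
      C * ∑' d : ℕ, |dconv ϑ d| := by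
  refine ⟨2, fun ϑ hϑ a q hq hco t ht => ?_⟩
  have hmain : t / q * ∑' d : ℕ, (if d.gcd q = 1 then dconv ϑ d / d else 0) =
      ∑' d : ℕ, dconv ϑ d * (t / q * if d.gcd q = 1 then (d : ℝ)⁻¹ else 0) := by
    rw [← tsum_mul_left]
    congr 1 with d
    split_ifs <;> ring
  rw [sum_eq_tsum_dconv_mul_card ϑ (by simp), hmain]
  refine abs_tsum_mul_sub_tsum_mul_le hϑ (B := t / q) (fun d => ?_) fun d => ?_
  · rw [abs_mul, abs_of_nonneg (by positivity : 0 ≤ t / q)]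
    refine mul_le_of_le_one_right (by positivity) ?_
    split_ifs
    · rw [abs_inv, Nat.abs_cast]; exact Nat.cast_inv_le_one d
    · simp
  · rw [filter_filter]
    exact abs_card_filter_intModEq_dvd_sub_le a hq hco ht d
end

section
/- Every positive integer x₂ dividing a cube x₃³ (x₃ ∈ ℤ) can be written uniquely as x₂ = y₁·y₂²·y₃³ with y₁, y₂, y₃ positive integers such that y₁y₂ is squarefree; moreover then y₁y₂y₃ divides x₃. -/
open Finset

private lemma prod_primes_pow_factorization (S : Finset ℕ) (hS : ∀ p ∈ S, p.Prime)
    (g : ℕ → ℕ) (q : ℕ) :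
    (∏ p ∈ S, p ^ g p).factorization q = if q ∈ S then g q else 0 := by
  rw [Nat.factorization_prod (fun p hp => pow_ne_zero _ (hS p hp).pos.ne')]
  rw [Finsupp.finset_sum_apply]
  rw [Finset.sum_congr rfl
    (fun p hp => by rw [(hS p hp).factorization_pow, Finsupp.single_apply])]
  exact Finset.sum_ite_eq' S q g

private lemma nat_decomp (n : ℕ) (hn : 0 < n) :
    ∃ a b c : ℕ, 0 < a ∧ 0 < b ∧ 0 < c ∧ n = a * b ^ 2 * c ^ 3 ∧ Squarefree (a * b) ∧
      ∀ m : ℕ, m ≠ 0 → n ∣ m ^ 3 → a * b * c ∣ m := by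
  classical
  set f := n.factorization with hf
  set A := n.primeFactors.filter (fun p => f p % 3 = 1) with hA
  set B := n.primeFactors.filter (fun p => f p % 3 = 2) with hB
  have hAp : ∀ p ∈ A, p.Prime := fun p hp => Nat.prime_of_mem_primeFactors (mem_filter.mp hp).1
  have hBp : ∀ p ∈ B, p.Prime := fun p hp => Nat.prime_of_mem_primeFactors (mem_filter.mp hp).1
  have hPp : ∀ p ∈ n.primeFactors, p.Prime := fun p hp => Nat.prime_of_mem_primeFactors hp
  set a := ∏ p ∈ A, p with ha
  set b := ∏ p ∈ B, p with hb
  set c := ∏ p ∈ n.primeFactors, p ^ (f p / 3) with hc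
  have ha' : a = ∏ p ∈ A, p ^ (fun _ => 1) p := by simp [ha]
  have hb' : b = ∏ p ∈ B, p ^ (fun _ => 1) p := by simp [hb]
  have hafact : ∀ q, a.factorization q = if q ∈ A then 1 else 0 := fun q => by
    rw [ha', prod_primes_pow_factorization A hAp _ q]
  have hbfact : ∀ q, b.factorization q = if q ∈ B then 1 else 0 := fun q => by
    rw [hb', prod_primes_pow_factorization B hBp _ q]
  have hcfact : ∀ q, c.factorization q = if q ∈ n.primeFactors then f q / 3 else 0 := fun q => by
    rw [hc, prod_primes_pow_factorization n.primeFactors hPp _ q]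
  have hapos : 0 < a := Finset.prod_pos fun p hp => (hAp p hp).pos
  have hbpos : 0 < b := Finset.prod_pos fun p hp => (hBp p hp).pos
  have hcpos : 0 < c := Finset.prod_pos fun p hp => pow_pos (hPp p hp).pos _
  have habc : ∀ q, (a * b ^ 2 * c ^ 3).factorization q =
      (if q ∈ A then 1 else 0) + 2 * (if q ∈ B then 1 else 0) +
        3 * (if q ∈ n.primeFactors then f q / 3 else 0) := by
    intro q
    rw [Nat.factorization_mul (mul_ne_zero hapos.ne' (pow_ne_zero _ hbpos.ne'))
        (pow_ne_zero _ hcpos.ne'),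
      Nat.factorization_mul hapos.ne' (pow_ne_zero _ hbpos.ne'),
      Nat.factorization_pow, Nat.factorization_pow]
    simp [hafact q, hbfact q, hcfact q, mul_comm]
  have hmemA : ∀ q, q ∈ A ↔ q ∈ n.primeFactors ∧ f q % 3 = 1 := fun q => mem_filter
  have hmemB : ∀ q, q ∈ B ↔ q ∈ n.primeFactors ∧ f q % 3 = 2 := fun q => mem_filter
  have hfq0 : ∀ q, q ∉ n.primeFactors → f q = 0 := by
    intro q hq
    show n.factorization q = 0
    rw [← Finsupp.notMem_support_iff, Nat.support_factorization]
    exact hq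
  have key : ∀ q, (a * b ^ 2 * c ^ 3).factorization q = f q := by
    intro q
    rw [habc q]
    by_cases hq : q ∈ n.primeFactors
    · have h1 : (q ∈ A) ↔ f q % 3 = 1 := by rw [hmemA]; tauto
      have h2 : (q ∈ B) ↔ f q % 3 = 2 := by rw [hmemB]; tauto
      have h3 : f q % 3 = 0 ∨ f q % 3 = 1 ∨ f q % 3 = 2 := by omega
      rcases h3 with hr | hr | hr <;>
        simp only [h1, h2, hr, if_pos hq] <;> norm_num <;> omega
    · have h0 := hfq0 q hq
      have h1 : q ∉ A := fun hqa => hq (mem_filter.mp hqa).1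
      have h2 : q ∉ B := fun hqb => hq (mem_filter.mp hqb).1
      simp [h0, h1, h2, hq]
  have hneq : n = a * b ^ 2 * c ^ 3 := by
    refine Nat.factorization_inj hn.ne'
      (mul_ne_zero (mul_ne_zero hapos.ne' (pow_ne_zero _ hbpos.ne'))
        (pow_ne_zero _ hcpos.ne')) ?_
    exact (Finsupp.ext fun q => key q).symm
  refine ⟨a, b, c, hapos, hbpos, hcpos, hneq, ?_, ?_⟩
  · rw [Nat.squarefree_iff_factorization_le_one (mul_ne_zero hapos.ne' hbpos.ne')]
    intro q
    rw [Nat.factorization_mul hapos.ne' hbpos.ne', Finsupp.add_apply, hafact q, hbfact q]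
    by_cases hqa : q ∈ A <;> by_cases hqb : q ∈ B
    · exfalso
      have := (hmemA q).mp hqa
      have := (hmemB q).mp hqb
      omega
    all_goals simp [hqa, hqb]
  · intro m hm hdvd
    rw [← Nat.factorization_le_iff_dvd (mul_ne_zero (mul_ne_zero hapos.ne' hbpos.ne') hcpos.ne') hm]
    intro q
    have hle : f q ≤ 3 * m.factorization q := by
      have := (Nat.factorization_le_iff_dvd hn.ne' (pow_ne_zero 3 hm)).mpr hdvd q
      rwa [Nat.factorization_pow, Finsupp.smul_apply, smul_eq_mul] at this
    rw [Nat.factorization_mul (mul_ne_zero hapos.ne' hbpos.ne') hcpos.ne',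
      Nat.factorization_mul hapos.ne' hbpos.ne']
    simp only [Finsupp.add_apply, hafact q, hbfact q, hcfact q]
    by_cases hq : q ∈ n.primeFactors
    · have h1 : (q ∈ A) ↔ f q % 3 = 1 := by rw [hmemA]; tauto
      have h2 : (q ∈ B) ↔ f q % 3 = 2 := by rw [hmemB]; tauto
      have h3 : f q % 3 = 0 ∨ f q % 3 = 1 ∨ f q % 3 = 2 := by omega
      rcases h3 with hr | hr | hr <;>
        simp only [h1, h2, hr, if_pos hq] <;> norm_num <;> omega
    · have h0 := hfq0 q hq
      have h1 : q ∉ A := fun hqa => hq (mem_filter.mp hqa).1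
      have h2 : q ∉ B := fun hqb => hq (mem_filter.mp hqb).1
      simp [h0, h1, h2, hq]

private lemma nat_unique {a₁ b₁ c₁ a₂ b₂ c₂ : ℕ}
    (ha₁ : 0 < a₁) (hb₁ : 0 < b₁) (hc₁ : 0 < c₁)
    (ha₂ : 0 < a₂) (hb₂ : 0 < b₂) (hc₂ : 0 < c₂)
    (hsf₁ : Squarefree (a₁ * b₁)) (hsf₂ : Squarefree (a₂ * b₂))
    (heq : a₁ * b₁ ^ 2 * c₁ ^ 3 = a₂ * b₂ ^ 2 * c₂ ^ 3) :
    a₁ = a₂ ∧ b₁ = b₂ ∧ c₁ = c₂ := by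
  have key : ∀ q, a₁.factorization q = a₂.factorization q ∧
      b₁.factorization q = b₂.factorization q ∧ c₁.factorization q = c₂.factorization q := by
    intro q
    have e : a₁.factorization q + 2 * b₁.factorization q + 3 * c₁.factorization q =
        a₂.factorization q + 2 * b₂.factorization q + 3 * c₂.factorization q := by
      have := congrArg (fun k => k.factorization q) heq
      simpa only [Nat.factorization_mul (mul_ne_zero ha₁.ne' (pow_ne_zero _ hb₁.ne'))
          (pow_ne_zero _ hc₁.ne'), Nat.factorization_mul ha₁.ne' (pow_ne_zero _ hb₁.ne'),
        Nat.factorization_mul (mul_ne_zero ha₂.ne' (pow_ne_zero _ hb₂.ne'))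
          (pow_ne_zero _ hc₂.ne'), Nat.factorization_mul ha₂.ne' (pow_ne_zero _ hb₂.ne'),
        Nat.factorization_pow, Finsupp.add_apply, Finsupp.smul_apply, smul_eq_mul] using this
    have s₁ : a₁.factorization q + b₁.factorization q ≤ 1 := by
      have := (Nat.squarefree_iff_factorization_le_one
        (mul_ne_zero ha₁.ne' hb₁.ne')).mp hsf₁ q
      rwa [Nat.factorization_mul ha₁.ne' hb₁.ne', Finsupp.add_apply] at this
    have s₂ : a₂.factorization q + b₂.factorization q ≤ 1 := by
      have := (Nat.squarefree_iff_factorization_le_one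
        (mul_ne_zero ha₂.ne' hb₂.ne')).mp hsf₂ q
      rwa [Nat.factorization_mul ha₂.ne' hb₂.ne', Finsupp.add_apply] at this
    omega
  refine ⟨?_, ?_, ?_⟩
  · exact Nat.factorization_inj ha₁.ne' ha₂.ne' (Finsupp.ext fun q => (key q).1)
  · exact Nat.factorization_inj hb₁.ne' hb₂.ne' (Finsupp.ext fun q => (key q).2.1)
  · exact Nat.factorization_inj hc₁.ne' hc₂.ne' (Finsupp.ext fun q => (key q).2.2)

/-- Every positive integer `x₂` dividing a cube `x₃³` can be written uniquely as
`x₂ = y₁y₂²y₃³` with `y₁,y₂,y₃` positive, `y₁y₂` squarefree and `y₁y₂y₃ ∣ x₃`. -/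
theorem stmt_15 (x₂ x₃ : ℤ) (hx₂ : 0 < x₂) (h : x₂ ∣ x₃^3) :
    ∃! y : ℤ × ℤ × ℤ,
      0 < y.1 ∧ 0 < y.2.1 ∧ 0 < y.2.2 ∧
      x₂ = y.1 * y.2.1^2 * y.2.2^3 ∧
      Squarefree (y.1 * y.2.1) ∧
      y.1 * y.2.1 * y.2.2 ∣ x₃ := by
  obtain ⟨n, rfl⟩ : ∃ n : ℕ, (n : ℤ) = x₂ := ⟨x₂.toNat, Int.toNat_of_nonneg hx₂.le⟩
  have hn : 0 < n := by exact_mod_cast hx₂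
  obtain ⟨a, b, c, hap, hbp, hcp, hneq, hsf, hdvd⟩ := nat_decomp n hn
  refine ⟨((a : ℤ), (b : ℤ), (c : ℤ)), ⟨?_, ?_, ?_, ?_, ?_, ?_⟩, ?_⟩
  · show (0 : ℤ) < (a : ℤ); exact_mod_cast hap
  · show (0 : ℤ) < (b : ℤ); exact_mod_cast hbp
  · show (0 : ℤ) < (c : ℤ); exact_mod_cast hcp
  · show (n : ℤ) = (a : ℤ) * (b : ℤ) ^ 2 * (c : ℤ) ^ 3; exact_mod_cast hneq
  · show Squarefree ((a : ℤ) * (b : ℤ))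
    rw [show ((a : ℤ) * b) = ((a * b : ℕ) : ℤ) by push_cast; ring]
    exact Int.squarefree_natCast.mpr hsf
  · show (a : ℤ) * (b : ℤ) * (c : ℤ) ∣ x₃
    by_cases hx3 : x₃ = 0
    · simp [hx3]
    · have h3 : n ∣ x₃.natAbs ^ 3 := by
        have := Int.natAbs_dvd_natAbs.mpr h
        simpa [Int.natAbs_pow] using this
      have hd := hdvd x₃.natAbs (Int.natAbs_ne_zero.mpr hx3) h3
      have : ((a * b * c : ℕ) : ℤ) ∣ x₃ :=
        Int.dvd_natAbs.mp (Int.natCast_dvd_natCast.mpr hd)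
      exact_mod_cast this
  · rintro ⟨z₁, z₂, z₃⟩ ⟨hz₁, hz₂, hz₃, hzeq, hzsf, hzdvd⟩
    obtain ⟨m₁, rfl⟩ : ∃ m : ℕ, (m : ℤ) = z₁ := ⟨z₁.toNat, Int.toNat_of_nonneg hz₁.le⟩
    obtain ⟨m₂, rfl⟩ : ∃ m : ℕ, (m : ℤ) = z₂ := ⟨z₂.toNat, Int.toNat_of_nonneg hz₂.le⟩
    obtain ⟨m₃, rfl⟩ : ∃ m : ℕ, (m : ℤ) = z₃ := ⟨z₃.toNat, Int.toNat_of_nonneg hz₃.le⟩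
    have hz₁' : (0 : ℤ) < (m₁ : ℤ) := hz₁
    have hm₁ : 0 < m₁ := by exact_mod_cast hz₁'
    have hz₂' : (0 : ℤ) < (m₂ : ℤ) := hz₂
    have hm₂ : 0 < m₂ := by exact_mod_cast hz₂'
    have hz₃' : (0 : ℤ) < (m₃ : ℤ) := hz₃
    have hm₃ : 0 < m₃ := by exact_mod_cast hz₃'
    have hzeq' : (n : ℤ) = (m₁ : ℤ) * (m₂ : ℤ) ^ 2 * (m₃ : ℤ) ^ 3 := hzeq
    have hzsf' : Squarefree ((m₁ : ℤ) * (m₂ : ℤ)) := hzsf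
    have hsfm : Squarefree (m₁ * m₂) := by
      rw [← Int.squarefree_natCast]; push_cast; exact hzsf'
    have heqm : m₁ * m₂ ^ 2 * m₃ ^ 3 = a * b ^ 2 * c ^ 3 := by
      have : ((m₁ * m₂ ^ 2 * m₃ ^ 3 : ℕ) : ℤ) = ((a * b ^ 2 * c ^ 3 : ℕ) : ℤ) := by
        push_cast
        rw [← hzeq']
        exact_mod_cast hneq
      exact_mod_cast this
    obtain ⟨e1, e2, e3⟩ := nat_unique hm₁ hm₂ hm₃ hap hbp hcp hsfm hsf heqm
    simp [e1, e2, e3]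
end
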